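/- Let H be an s×s positive Hermitian matrix-valued function of the form H(z) = C(z) S(z)² C(z)* on the punctured disc, where S(z) = diag(|z|^{α₁},...,|z|^{α_r}) with 0 ≤ α₁ < ... < α_r < 1, C(z) is a smooth s×r matrix of maximal rank s, and for each row k there is an index j_k with C_{k,j_k}(0) ≠ 0 and C_{kj}(0) = 0 for j < j_k (with j₁ < ... < j_s). Then |z|^{-2(α_{j₁}+...+α_{j_s})} det H(z) converges to a positive limit as z → 0. -/

import Mathlib

open Matrix Filter

/-- For `H(z) = C(z) S(z)² C(z)ᴴ` with `S(z) = diag(|z|^{α₁},…,|z|^{α_r})`,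
`0 ≤ α₁ < ⋯ < α_r < 1`, `C` smooth of maximal rank `s`, and each row `k` of `C(0)` having
its first nonzero entry in column `j_k` (with `j₁ < ⋯ < j_s`), the normalized determinant
`|z|^{-2(α_{j₁}+⋯+α_{j_s})} det H(z)` converges to a positive limit as `z → 0`. -/
theorem stmt16 (s r : ℕ) (α : Fin r → ℝ) (hmono : StrictMono α)
    (h0 : ∀ j, 0 ≤ α j) (h1 : ∀ j, α j < 1)
    (C : ℂ → Matrix (Fin s) (Fin r) ℂ)
    (hCsm : ∀ k j, ContDiff ℝ (⊤ : ℕ∞) fun z => C z k j)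
    (hrank : ∀ z : ℂ, (C z).rank = s)
    (j : Fin s → Fin r) (hj : StrictMono j)
    (hjnz : ∀ k, C 0 k (j k) ≠ 0)
    (hjz : ∀ k, ∀ l : Fin r, l < j k → C 0 k l = 0) :
    ∃ L : ℝ, 0 < L ∧
      Tendsto (fun z : ℂ =>
          (‖z‖ ^ (-(2 * ∑ k, α (j k))) : ℝ) •
            (C z * (Matrix.diagonal fun jj => ((‖z‖ ^ α jj : ℝ) : ℂ)) ^ 2 * (C z)ᴴ).det)
        (nhdsWithin 0 {(0 : ℂ)}ᶜ) (nhds (L : ℂ)) := by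
  classical
  set c : Fin s → ℂ := fun k => C 0 k (j k) with hc
  refine ⟨∏ k, ‖c k‖ ^ 2,
    Finset.prod_pos (fun k _ => pow_pos (norm_pos_iff.mpr (hjnz k)) 2), ?_⟩
  set B : ℂ → Matrix (Fin s) (Fin r) ℂ :=
    fun z => Matrix.of fun k l => ((‖z‖ ^ (α l - α (j k)) : ℝ) : ℂ) * C z k l with hBdef
  set B₀ : Matrix (Fin s) (Fin r) ℂ :=
    Matrix.of (fun k l => if l = j k then c k else 0) with hB₀def
  -- entrywise convergence of B to B₀
  have hent : ∀ k l, Tendsto (fun z => B z k l)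
      (nhdsWithin 0 {(0:ℂ)}ᶜ) (nhds (B₀ k l)) := by
    intro k l
    rcases lt_trichotomy l (j k) with hlt | heq | hgt
    · -- first nonzero entry is to the right: C 0 k l = 0, use Lipschitz bound
      have hB₀0 : B₀ k l = 0 := by simp [hB₀def, hlt.ne]
      rw [hB₀0]
      have hC0 : C 0 k l = 0 := hjz k l hlt
      have hδ : (-1 : ℝ) < α l - α (j k) := by
        have := h1 (j k); have := h0 l; linarith
    -- Lipschitz estimate near 0
      obtain ⟨K, t, ht, hlip⟩ :=
        (((hCsm k l).contDiffAt (x := 0)).of_le (by simp)).exists_lipschitzOnWith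
      have h0t : (0:ℂ) ∈ t := mem_of_mem_nhds ht
      have hbound : ∀ᶠ z in nhdsWithin (0:ℂ) {(0:ℂ)}ᶜ,
          ‖B z k l‖ ≤ (K : ℝ) * ‖z‖ ^ (α l - α (j k) + 1) := by
        filter_upwards [nhdsWithin_le_nhds ht, self_mem_nhdsWithin] with z hzt hz0
        have hzne : z ≠ 0 := hz0
        have hz : (0:ℝ) < ‖z‖ := norm_pos_iff.mpr hzne
        have hCb : ‖C z k l‖ ≤ (K : ℝ) * ‖z‖ := by
          have := hlip.dist_le_mul z hzt 0 h0t
          simpa [dist_eq_norm, hC0] using this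
        have hBn : ‖B z k l‖ = ‖z‖ ^ (α l - α (j k)) * ‖C z k l‖ := by
          have habs : ‖((‖z‖ ^ (α l - α (j k)) : ℝ) : ℂ)‖ = ‖z‖ ^ (α l - α (j k)) := by
            rw [Complex.norm_real, Real.norm_eq_abs,
              abs_of_nonneg (Real.rpow_nonneg (norm_nonneg z) _)]
          rw [hBdef]
          simp only [Matrix.of_apply, norm_mul, habs]
        calc ‖B z k l‖ = ‖z‖ ^ (α l - α (j k)) * ‖C z k l‖ := hBn
          _ ≤ ‖z‖ ^ (α l - α (j k)) * ((K : ℝ) * ‖z‖) := by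
              exact mul_le_mul_of_nonneg_left hCb (Real.rpow_nonneg (norm_nonneg z) _)
          _ = (K : ℝ) * ‖z‖ ^ (α l - α (j k) + 1) := by
              rw [Real.rpow_add hz, Real.rpow_one]; ring
      have hg : Tendsto (fun z : ℂ => (K : ℝ) * ‖z‖ ^ (α l - α (j k) + 1))
          (nhdsWithin 0 {(0:ℂ)}ᶜ) (nhds 0) := by
        have hc' : ContinuousAt (fun x : ℝ => x ^ (α l - α (j k) + 1)) 0 :=
          Real.continuousAt_rpow_const 0 _ (Or.inr (by linarith))
        have h' : Tendsto (fun z : ℂ => ‖z‖ ^ (α l - α (j k) + 1)) (nhds 0) (nhds 0) := by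
          have := hc'.tendsto.comp (tendsto_norm_zero (E := ℂ))
          simpa [Real.zero_rpow (by linarith : α l - α (j k) + 1 ≠ 0), Function.comp_def] using this
        simpa using ((h'.const_mul (K : ℝ)).mono_left nhdsWithin_le_nhds)
      exact squeeze_zero_norm' hbound hg
    · -- diagonal position
      have hB₀c : B₀ k l = c k := by simp [hB₀def, heq]
      rw [hB₀c]
      have : (fun z : ℂ => B z k l) = fun z => C z k l := by
        funext z; simp [hBdef, heq]
      rw [this, heq, hc]
      exact ((hCsm k (j k)).continuous.tendsto 0).mono_left nhdsWithin_le_nhds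
    · -- to the right of the pivot: positive power of ‖z‖ kills the entry
      have hB₀0 : B₀ k l = 0 := by simp [hB₀def, hgt.ne']
      rw [hB₀0]
      have hpos : 0 < α l - α (j k) := sub_pos.mpr (hmono hgt)
      have h1' : Tendsto (fun z : ℂ => ((‖z‖ ^ (α l - α (j k)) : ℝ) : ℂ))
          (nhds 0) (nhds 0) := by
        have hc' : ContinuousAt (fun x : ℝ => x ^ (α l - α (j k))) 0 :=
          Real.continuousAt_rpow_const 0 _ (Or.inr hpos.le)
        have := (Complex.continuous_ofReal.tendsto _).comp
          (hc'.tendsto.comp (tendsto_norm_zero (E := ℂ)))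
        simpa [Real.zero_rpow hpos.ne', Function.comp_def] using this
      have h2' : Tendsto (fun z => C z k l) (nhds 0) (nhds (C 0 k l)) :=
        (hCsm k l).continuous.tendsto 0
      have := (h1'.mul h2').mono_left (nhdsWithin_le_nhds (s := {(0:ℂ)}ᶜ))
      simpa [hBdef] using this
  have hBt : Tendsto B (nhdsWithin 0 {(0:ℂ)}ᶜ) (nhds B₀) :=
    tendsto_pi_nhds.2 fun k => tendsto_pi_nhds.2 fun l => hent k l
  -- convergence of the Gram determinant
  have hdet : Tendsto (fun z => (B z * (B z)ᴴ).det) (nhdsWithin 0 {(0:ℂ)}ᶜ)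
      (nhds ((B₀ * B₀ᴴ).det)) := by
    have hcont : Continuous fun M : Matrix (Fin s) (Fin r) ℂ => (M * Mᴴ).det :=
      (continuous_id.matrix_mul continuous_id.matrix_conjTranspose).matrix_det
    exact (hcont.tendsto B₀).comp hBt
  -- value of the limit
  have hBB : (B₀ * B₀ᴴ).det = ((∏ k, ‖c k‖ ^ 2 : ℝ) : ℂ) := by
    have hdiag : B₀ * B₀ᴴ = Matrix.diagonal fun k => ((‖c k‖ ^ 2 : ℝ) : ℂ) := by
      ext k k'
      simp only [Matrix.mul_apply, conjTranspose_apply, hB₀def, Matrix.of_apply]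
      rw [Finset.sum_eq_single (j k)]
      · by_cases h : k = k'
        · subst h
          simp only [if_pos rfl, Matrix.diagonal_apply_eq, Complex.star_def]
          rw [Complex.mul_conj]
          norm_cast
          rw [Complex.normSq_eq_norm_sq]
          simp
        · have hne : j k ≠ j k' := fun hh => h (hj.injective hh)
          simp [Matrix.diagonal_apply_ne _ h, hne]
      · intro l _ hl; simp [hl]
      · simp
    rw [hdiag, Matrix.det_diagonal]
    push_cast
    rfl
  rw [hBB] at hdet
  -- eventual equality of the two expressions
  have heq : ∀ᶠ z in nhdsWithin (0:ℂ) {(0:ℂ)}ᶜ,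
      (‖z‖ ^ (-(2 * ∑ k, α (j k))) : ℝ) •
          (C z * (Matrix.diagonal fun jj => ((‖z‖ ^ α jj : ℝ) : ℂ)) ^ 2 * (C z)ᴴ).det
        = (B z * (B z)ᴴ).det := by
    filter_upwards [self_mem_nhdsWithin] with z hz0
    have hzne : z ≠ 0 := hz0
    have hz : (0:ℝ) < ‖z‖ := norm_pos_iff.mpr hzne
    set x := ‖z‖ with hx
    set D : Matrix (Fin s) (Fin s) ℂ :=
      Matrix.diagonal fun k => ((x ^ (-(α (j k))) : ℝ) : ℂ) with hD
    set S : Matrix (Fin r) (Fin r) ℂ :=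
      Matrix.diagonal fun jj => ((x ^ α jj : ℝ) : ℂ) with hS
    have hBz : B z = D * C z * S := by
      ext k l
      rw [hD, hS, Matrix.mul_diagonal, Matrix.diagonal_mul]
      show ((x ^ (α l - α (j k)) : ℝ) : ℂ) * C z k l = _
      have hre : x ^ (α l - α (j k)) = x ^ (-(α (j k))) * x ^ α l := by
        rw [← Real.rpow_add hz]; ring_nf
      rw [hre]
      push_cast
      ring
    have hSH : Sᴴ = S := by
      rw [hS, Matrix.diagonal_conjTranspose,
        show (star fun jj => ((x ^ α jj : ℝ) : ℂ)) = fun jj => ((x ^ α jj : ℝ) : ℂ) from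
          funext fun jj => Complex.conj_ofReal _]
    have hDH : Dᴴ = D := by
      rw [hD, Matrix.diagonal_conjTranspose,
        show (star fun k => ((x ^ (-(α (j k))) : ℝ) : ℂ))
            = fun k => ((x ^ (-(α (j k))) : ℝ) : ℂ) from
          funext fun k => Complex.conj_ofReal _]
    have hmul : B z * (B z)ᴴ = D * (C z *
        (Matrix.diagonal fun jj => ((x ^ α jj : ℝ) : ℂ)) ^ 2 * (C z)ᴴ) * D := by
      rw [hBz]
      simp only [Matrix.conjTranspose_mul, hSH, hDH, sq, Matrix.mul_assoc]
      rfl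
    have hdetD : D.det = ((x ^ (-(∑ k, α (j k))) : ℝ) : ℂ) := by
      rw [hD, Matrix.det_diagonal, ← Complex.ofReal_prod]
      congr 1
      rw [show (-(∑ k, α (j k))) = ∑ k, (-(α (j k))) by rw [Finset.sum_neg_distrib],
        Real.rpow_sum_of_pos hz]
    rw [hmul, Matrix.det_mul, Matrix.det_mul, hdetD, Complex.real_smul]
    have hre2 : x ^ (-(2 * ∑ k, α (j k)))
        = x ^ (-(∑ k, α (j k))) * x ^ (-(∑ k, α (j k))) := by
      rw [← Real.rpow_add hz]; ring_nf
    rw [hre2]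
    push_cast
    ring
  exact Tendsto.congr' (heq.mono fun z h => h.symm) hdet
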